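/- Let r_b > 1 and let (φ_n) be a sequence of continuous functions on [1,r_b] converging uniformly to a continuous function φ. Define ρ̃[ψ](e) := inf{ a ∈ [1,r_b] : ψ(s) ≤ e for all s ∈ [a,r_b] } for continuous ψ on [1,r_b]. Then for almost every (w,L) ∈ ℝ² (with respect to the Lebesgue measure on ℝ²), ρ̃[ φ_n + L²/(2(·)²) ]( w²/2 + L²/(2 r_b²) ) → ρ̃[ φ + L²/(2(·)²) ]( w²/2 + L²/(2 r_b²) ) as n → ∞, where φ_n + L²/(2(·)²) denotes the function r ↦ φ_n(r) + L²/(2r²) on [1,r_b]. -/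

import Mathlib

/-- `ρ̃[ψ](e) := inf { a ∈ [1, r_b] : ψ(s) ≤ e for all s ∈ [a, r_b] }`. -/
noncomputable def rhoTilde (rb : ℝ) (ψ : ℝ → ℝ) (e : ℝ) : ℝ :=
  sInf {a | a ∈ Set.Icc 1 rb ∧ ∀ s ∈ Set.Icc a rb, ψ s ≤ e}

/-!
Fix `L` and write `ψ = φ + L²/(2r²)`, `e = w²/2 + L²/(2 r_b²)`. If `|ψₙ - ψ| ≤ δ` on `[1, r_b]`,
then `ρ̃[ψ](e + δ) ≤ ρ̃[ψₙ](e) ≤ ρ̃[ψ](e - δ)`. Hence `ρ̃[ψₙ](e) → ρ̃[ψ](e)` when `e < ψ(r_b)` (all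
values are eventually `0`) and when `e > ψ(r_b)` is a continuity point of `ρ̃[ψ]`. Above `ψ(r_b)`
the map `e ↦ ρ̃[ψ](e)` is antitone, so it has countably many discontinuities, and `w ↦ w²/2 + c`
is at most two-to-one: for each `L` only countably many `w` are bad. Fubini then concludes, since
the convergence set is measurable: by continuity of `ψ` each sublevel set `{ρ̃ ≤ t}` with `t ≥ 1`
is the union of an open and a closed subset of `ℝ²`.
-/

open Set Filter MeasureTheory Topology

section Barrier

variable {rb e : ℝ} {ψ : ℝ → ℝ}

def rhoTildeSet (rb : ℝ) (ψ : ℝ → ℝ) (e : ℝ) : Set ℝ :=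
  {a | a ∈ Icc 1 rb ∧ ∀ s ∈ Icc a rb, ψ s ≤ e}

lemma rhoTilde_def : rhoTilde rb ψ e = sInf (rhoTildeSet rb ψ e) := rfl

lemma bddBelow_rhoTildeSet : BddBelow (rhoTildeSet rb ψ e) := ⟨1, fun _ ha => ha.1.1⟩

lemma right_mem_rhoTildeSet (hrb : 1 ≤ rb) (he : ψ rb ≤ e) : rb ∈ rhoTildeSet rb ψ e :=
  ⟨right_mem_Icc.2 hrb, fun s hs => by rwa [le_antisymm hs.2 hs.1]⟩

-- `sInf ∅ = 0`: below the barrier `ρ̃` takes the junk value `0`.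
lemma rhoTilde_eq_zero (he : e < ψ rb) : rhoTilde rb ψ e = 0 := by
  have : rhoTildeSet rb ψ e = ∅ :=
    eq_empty_of_forall_notMem fun a ha => (ha.2 rb ⟨ha.1.2, le_rfl⟩).not_gt he
  rw [rhoTilde_def, this, Real.sInf_empty]

lemma one_le_rhoTilde (hrb : 1 ≤ rb) (he : ψ rb ≤ e) : 1 ≤ rhoTilde rb ψ e :=
  le_csInf ⟨rb, right_mem_rhoTildeSet hrb he⟩ fun _ ha => ha.1.1

lemma rhoTilde_le_right (hrb : 1 ≤ rb) : rhoTilde rb ψ e ≤ rb := by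
  rcases lt_or_ge e (ψ rb) with he | he
  · rw [rhoTilde_eq_zero he]; linarith
  · exact csInf_le bddBelow_rhoTildeSet (right_mem_rhoTildeSet hrb he)

lemma rhoTilde_le_rhoTilde {ψ' : ℝ → ℝ} {e' : ℝ} (hrb : 1 ≤ rb) (he : ψ rb ≤ e)
    (h : ∀ s ∈ Icc 1 rb, ψ s ≤ e → ψ' s ≤ e') : rhoTilde rb ψ' e' ≤ rhoTilde rb ψ e :=
  csInf_le_csInf bddBelow_rhoTildeSet ⟨rb, right_mem_rhoTildeSet hrb he⟩
    fun _ ⟨ha, hle⟩ => ⟨ha, fun s hs => h s ⟨ha.1.trans hs.1, hs.2⟩ (hle s hs)⟩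

lemma rhoTilde_mem_rhoTildeSet (hrb : 1 ≤ rb) (hψ : ContinuousOn ψ (Icc 1 rb))
    (he : ψ rb ≤ e) : rhoTilde rb ψ e ∈ rhoTildeSet rb ψ e := by
  set m := rhoTilde rb ψ e
  have hm : m ∈ Icc 1 rb := ⟨one_le_rhoTilde hrb he, rhoTilde_le_right hrb⟩
  refine ⟨hm, fun s hs => ?_⟩
  rcases hm.2.eq_or_lt with hm_eq | hm_lt
  · rwa [le_antisymm hs.2 (hm_eq ▸ hs.1)]
  have hclosed : IsClosed (Icc 1 rb ∩ ψ ⁻¹' Iic e) :=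
    hψ.preimage_isClosed_of_isClosed isClosed_Icc isClosed_Iic
  have htail : Ioc m rb ⊆ Icc 1 rb ∩ ψ ⁻¹' Iic e := fun s hs => by
    obtain ⟨a, ha, has⟩ := exists_lt_of_csInf_lt ⟨rb, right_mem_rhoTildeSet hrb he⟩ hs.1
    exact ⟨⟨ha.1.1.trans has.le, hs.2⟩, ha.2 s ⟨has.le, hs.2⟩⟩
  rw [← closure_Ioc hm_lt.ne] at hs
  exact (closure_minimal htail hclosed hs).2

lemma rhoTilde_le_iff (hrb : 1 ≤ rb) (hψ : ContinuousOn ψ (Icc 1 rb)) {t : ℝ} (ht : 1 ≤ t) :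
    rhoTilde rb ψ e ≤ t ↔ e < ψ rb ∨ ∀ s ∈ Icc t rb, ψ s ≤ e := by
  rcases lt_or_ge e (ψ rb) with he | he
  · simp only [rhoTilde_eq_zero he, he, true_or, iff_true]
    linarith
  simp only [he.not_gt, false_or]
  constructor
  · intro hle s hs
    exact (rhoTilde_mem_rhoTildeSet hrb hψ he).2 s ⟨hle.trans hs.1, hs.2⟩
  · intro h
    rcases le_or_gt t rb with htrb | htrb
    · exact csInf_le bddBelow_rhoTildeSet ⟨⟨ht, htrb⟩, h⟩
    · exact (rhoTilde_le_right hrb).trans htrb.le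

lemma rhoTilde_le_iff_of_lt_one (hrb : 1 ≤ rb) {t : ℝ} (ht : t < 1) :
    rhoTilde rb ψ e ≤ t ↔ e < ψ rb ∧ 0 ≤ t := by
  rcases lt_or_ge e (ψ rb) with he | he
  · simp [rhoTilde_eq_zero he, he]
  · simp only [he.not_gt, false_and, iff_false, not_le]
    exact ht.trans_le (one_le_rhoTilde hrb he)

theorem measurable_rhoTilde {X : Type*} [TopologicalSpace X] [MeasurableSpace X]
    [OpensMeasurableSpace X] (hrb : 1 ≤ rb) {ψ : X → ℝ → ℝ} {e : X → ℝ}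
    (hψ : ∀ p, ContinuousOn (ψ p) (Icc 1 rb)) (hψs : ∀ s, Continuous fun p => ψ p s)
    (he : Continuous e) : Measurable fun p => rhoTilde rb (ψ p) (e p) := by
  refine measurable_of_Iic fun t => ?_
  rcases lt_or_ge t 1 with ht | ht
  · have hpre : (fun p => rhoTilde rb (ψ p) (e p)) ⁻¹' Iic t =
        {p | e p < ψ p rb} ∩ {_p | 0 ≤ t} := by
      ext p; exact rhoTilde_le_iff_of_lt_one hrb ht
    rw [hpre]
    exact (measurableSet_lt he.measurable (hψs rb).measurable).inter (MeasurableSet.const _)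
  · have hpre : (fun p => rhoTilde rb (ψ p) (e p)) ⁻¹' Iic t =
        {p | e p < ψ p rb} ∪ ⋂ s ∈ Icc t rb, {p | ψ p s ≤ e p} := by
      ext p; simpa using rhoTilde_le_iff hrb (hψ p) ht
    rw [hpre]
    exact (isOpen_lt he (hψs rb)).measurableSet.union
      (isClosed_biInter fun s _ => isClosed_le (hψs s) he).measurableSet

lemma rhoTilde_le_rhoTilde_of_abs_sub_le {ψ' : ℝ → ℝ} {δ : ℝ} (hrb : 1 ≤ rb)
    (he : ψ rb + δ ≤ e) (h : ∀ s ∈ Icc 1 rb, |ψ' s - ψ s| ≤ δ) :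
    rhoTilde rb ψ (e + δ) ≤ rhoTilde rb ψ' e ∧ rhoTilde rb ψ' e ≤ rhoTilde rb ψ (e - δ) := by
  have hb := fun s hs => abs_sub_le_iff.1 (h s hs)
  constructor
  · refine rhoTilde_le_rhoTilde hrb ?_ fun s hs hψs => ?_
    · linarith [hb rb (right_mem_Icc.2 hrb)]
    · linarith [hb s hs]
  · refine rhoTilde_le_rhoTilde hrb (by linarith) fun s hs hψs => ?_
    linarith [hb s hs]

lemma countable_not_continuousAt_rhoTilde (hrb : 1 ≤ rb) (ψ : ℝ → ℝ) :
    {e | ψ rb < e ∧ ¬ContinuousAt (rhoTilde rb ψ) e}.Countable := by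
  have hanti : Antitone fun e => rhoTilde rb ψ (max e (ψ rb)) := fun _ _ h =>
    rhoTilde_le_rhoTilde hrb (le_max_right _ _) fun _ _ hs => hs.trans (max_le_max h le_rfl)
  refine hanti.countable_not_continuousAt.mono ?_
  rintro e ⟨he, hdisc⟩ hcont
  refine hdisc (hcont.congr ?_)
  filter_upwards [Ioi_mem_nhds he] with x hx
  rw [max_eq_left (le_of_lt hx)]

variable {ι : Type*} {l : Filter ι} {ψn : ι → ℝ → ℝ}

lemma tendsto_rhoTilde_of_lt (hrb : 1 ≤ rb) (he : e < ψ rb)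
    (hconv : TendstoUniformlyOn ψn ψ l (Icc 1 rb)) :
    Tendsto (fun n => rhoTilde rb (ψn n) e) l (𝓝 (rhoTilde rb ψ e)) := by
  have hev : ∀ᶠ n in l, e < ψn n rb :=
    (hconv.tendsto_at (right_mem_Icc.2 hrb)).eventually (lt_mem_nhds he)
  rw [rhoTilde_eq_zero he]
  exact tendsto_const_nhds.congr' (hev.mono fun n hn => (rhoTilde_eq_zero hn).symm)

lemma tendsto_rhoTilde_of_continuousAt (hrb : 1 ≤ rb) (he : ψ rb < e)
    (hcont : ContinuousAt (rhoTilde rb ψ) e) (hconv : TendstoUniformlyOn ψn ψ l (Icc 1 rb)) :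
    Tendsto (fun n => rhoTilde rb (ψn n) e) l (𝓝 (rhoTilde rb ψ e)) := by
  rw [Metric.tendsto_nhds]
  intro ε hε
  obtain ⟨δ, hδ, hnear⟩ := Metric.continuousAt_iff.1 hcont ε hε
  set η := min (δ / 2) (e - ψ rb)
  have hη : 0 < η := lt_min (by linarith) (by linarith)
  filter_upwards [Metric.tendstoUniformlyOn_iff.1 hconv η hη] with n hn
  have hclose : ∀ s ∈ Icc 1 rb, |ψn n s - ψ s| ≤ η := fun s hs => by
    rw [← Real.dist_eq, dist_comm]; exact (hn s hs).le
  obtain ⟨hlow, hup⟩ :=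
    rhoTilde_le_rhoTilde_of_abs_sub_le (e := e) hrb
      (by linarith [min_le_right (δ / 2) (e - ψ rb)]) hclose
  have hηδ : |η| < δ := by
    rw [abs_of_pos hη]; linarith [min_le_left (δ / 2) (e - ψ rb)]
  have hplus := hnear (x := e + η) (by rwa [Real.dist_eq, add_sub_cancel_left])
  have hminus := hnear (x := e - η) (by rwa [Real.dist_eq, sub_sub_cancel_left, abs_neg])
  rw [Real.dist_eq, abs_sub_lt_iff] at hplus hminus ⊢
  constructor <;> linarith

end Barrier

lemma countable_preimage_sq {T : Set ℝ} (hT : T.Countable) : ((· ^ 2) ⁻¹' T : Set ℝ).Countable := by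
  refine ((hT.image Real.sqrt).union (hT.image fun d => -Real.sqrt d)).mono fun w hw => ?_
  rcases le_total 0 w with h | h
  · exact Or.inl ⟨w ^ 2, hw, Real.sqrt_sq h⟩
  · refine Or.inr ⟨w ^ 2, hw, ?_⟩
    show -Real.sqrt (w ^ 2) = w
    rw [Real.sqrt_sq_eq_abs, abs_of_nonpos h, neg_neg]

lemma ae_sq_div_two_add_notMem {S : Set ℝ} (hS : S.Countable) (c : ℝ) :
    ∀ᵐ w : ℝ, w ^ 2 / 2 + c ∉ S := by
  have hcount : {w : ℝ | w ^ 2 / 2 + c ∈ S}.Countable :=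
    (countable_preimage_sq (hS.image fun e => 2 * (e - c))).mono fun w (hw : _ ∈ S) =>
      (⟨_, hw, by ring⟩ : w ^ 2 ∈ (fun e => 2 * (e - c)) '' S)
  exact hcount.ae_notMem volume

lemma measurableSet_tendsto_nhds {X : Type*} [MeasurableSpace X] {f : ℕ → X → ℝ} {g : X → ℝ}
    (hf : ∀ n, Measurable (f n)) (hg : Measurable g) :
    MeasurableSet {x | Tendsto (fun n => f n x) atTop (𝓝 (g x))} := by
  convert measurableSet_tendsto (l := atTop) (𝓝 0) (fun n => (hf n).sub hg) using 1
  ext x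
  exact tendsto_sub_nhds_zero_iff.symm

lemma continuousOn_effectivePotential {rb : ℝ} {φ : ℝ → ℝ} (hφ : ContinuousOn φ (Icc 1 rb))
    (L : ℝ) :
    ContinuousOn (fun r => φ r + L ^ 2 / (2 * r ^ 2)) (Icc 1 rb) :=
  hφ.add <| continuousOn_const.div (by fun_prop) fun r hr => by
    have : (0 : ℝ) < r := zero_lt_one.trans_le hr.1
    positivity

lemma measurable_rhoTilde_effectivePotential {rb : ℝ} (hrb : 1 ≤ rb) {φ : ℝ → ℝ}
    (hφ : ContinuousOn φ (Icc 1 rb)) :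
    Measurable fun p : ℝ × ℝ => rhoTilde rb (fun r => φ r + p.2 ^ 2 / (2 * r ^ 2))
      (p.1 ^ 2 / 2 + p.2 ^ 2 / (2 * rb ^ 2)) :=
  measurable_rhoTilde hrb (fun p => continuousOn_effectivePotential hφ p.2) (fun _ => by fun_prop)
    (by fun_prop)

/-- **Convergence of the barrier position of the effective potentials:** if continuous
functions `φ_n` converge uniformly on `[1, r_b]` to a continuous `φ`, then for almost every
`(w, L) ∈ ℝ²`,
`ρ̃[φ_n + L²/(2 ·²)](w²/2 + L²/(2 r_b²)) → ρ̃[φ + L²/(2 ·²)](w²/2 + L²/(2 r_b²))`. -/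
theorem rhoTilde_effectivePotential_tendsto (rb : ℝ) (hrb : 1 < rb)
    (φn : ℕ → ℝ → ℝ) (φ : ℝ → ℝ)
    (hcont : ∀ n, ContinuousOn (φn n) (Set.Icc 1 rb))
    (hφ : ContinuousOn φ (Set.Icc 1 rb))
    (hconv : TendstoUniformlyOn φn φ Filter.atTop (Set.Icc 1 rb)) :
    ∀ᵐ p : ℝ × ℝ ∂MeasureTheory.volume,
      Filter.Tendsto
        (fun n => rhoTilde rb (fun r => φn n r + p.2 ^ 2 / (2 * r ^ 2))
          (p.1 ^ 2 / 2 + p.2 ^ 2 / (2 * rb ^ 2)))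
        Filter.atTop
        (nhds (rhoTilde rb (fun r => φ r + p.2 ^ 2 / (2 * r ^ 2))
          (p.1 ^ 2 / 2 + p.2 ^ 2 / (2 * rb ^ 2)))) := by
  have hmeas := measurableSet_tendsto_nhds
    (fun n => measurable_rhoTilde_effectivePotential hrb.le (hcont n))
    (measurable_rhoTilde_effectivePotential hrb.le hφ)
  rw [Measure.volume_eq_prod, Measure.ae_prod_iff_ae_ae hmeas, Measure.ae_ae_comm hmeas]
  refine Eventually.of_forall fun L => ?_
  set ψ : ℝ → ℝ := fun r => φ r + L ^ 2 / (2 * r ^ 2)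
  have hconvL : TendstoUniformlyOn (fun n r => φn n r + L ^ 2 / (2 * r ^ 2)) ψ atTop (Icc 1 rb) :=
    hconv.fun_add fun _ hu => Eventually.of_forall fun _ _ _ => refl_mem_uniformity hu
  filter_upwards [ae_sq_div_two_add_notMem
    ((countable_not_continuousAt_rhoTilde hrb.le ψ).insert (ψ rb)) (L ^ 2 / (2 * rb ^ 2))]
    with w hw
  rcases lt_trichotomy (w ^ 2 / 2 + L ^ 2 / (2 * rb ^ 2)) (ψ rb) with h | h | h
  · exact tendsto_rhoTilde_of_lt hrb.le h hconvL
  · exact absurd (Or.inl h) hw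
  · exact tendsto_rhoTilde_of_continuousAt hrb.le h (not_not.1 fun hc => hw (Or.inr ⟨h, hc⟩))
      hconvL
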